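/- arXiv:2106.03970 — 4 statements merged into one kernel-verified Lean document; each statement's English description precedes it below -/
import Mathlib

section
/- Let H be a d×n real matrix (d ≥ n) with Frobenius norm 1, and let σ₁ ≥ ... ≥ σ_n ≥ 0 be its singular values. Define V(H) = ‖Hᵀ H - (1/n) I_n‖_F and V̂(H) = 1/n - σ_n². Then V(H) ≤ 2n · V̂(H). -/
/-!
With `H = U S Vᵀ` we get `HᵀH - I/n = V · diag(σⱼ² - 1/n) · Vᵀ`, so the left-hand side is the
Euclidean norm of `gⱼ = σⱼ² - 1/n`, and `∑ σⱼ² = ‖H‖_F² = 1` makes `∑ gⱼ = 0`. Bound the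
`ℓ²` norm by the `ℓ¹` norm; as `g` is centred, `‖g‖₁ = 2 ∑ gⱼ⁻`, and every `gⱼ⁻` is at most
`1/n - σₙ²` because `σₙ` is the smallest singular value.
-/

open Matrix Finset

namespace Matrix

variable {m n R : Type*} [CommRing R]

theorem sum_sq_eq_trace_transpose_mul [Fintype m] [Fintype n] (A : Matrix m n R) :
    ∑ i, ∑ j, A i j ^ 2 = trace (Aᵀ * A) := by
  rw [Finset.sum_comm]
  simp only [trace, diag, mul_apply, transpose_apply, sq]

theorem transpose_mul_self_orthogonal_mul [Fintype m] [DecidableEq m] {U : Matrix m m R}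
    (hU : U ∈ orthogonalGroup m R) (A : Matrix m n R) : (U * A)ᵀ * (U * A) = Aᵀ * A := by
  rw [transpose_mul, Matrix.mul_assoc, ← Matrix.mul_assoc Uᵀ,
    (mem_orthogonalGroup_iff' m R).mp hU, Matrix.one_mul]

variable [Fintype n] [DecidableEq n]

theorem sum_sq_diagonal (g : n → R) : ∑ i, ∑ j, diagonal g i j ^ 2 = ∑ i, g i ^ 2 := by
  rw [sum_sq_eq_trace_transpose_mul, diagonal_transpose, diagonal_mul_diagonal, trace_diagonal]
  simp only [sq]

theorem trace_orthogonal_conj {V : Matrix n n R} (hV : V ∈ orthogonalGroup n R)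
    (A : Matrix n n R) : trace (V * A * Vᵀ) = trace A := by
  rw [trace_mul_cycle, (mem_orthogonalGroup_iff' n R).mp hV, Matrix.one_mul]

theorem orthogonal_conj_sub_smul_one {V : Matrix n n R} (hV : V ∈ orthogonalGroup n R)
    (A : Matrix n n R) (c : R) : V * A * Vᵀ - c • 1 = V * (A - c • 1) * Vᵀ := by
  rw [Matrix.mul_sub, Matrix.sub_mul, Matrix.mul_smul, Matrix.smul_mul, Matrix.mul_one,
    (mem_orthogonalGroup_iff n R).mp hV]

theorem sum_sq_orthogonal_conj {V : Matrix n n R} (hV : V ∈ orthogonalGroup n R)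
    (A : Matrix n n R) : ∑ i, ∑ j, (V * A * Vᵀ) i j ^ 2 = ∑ i, ∑ j, A i j ^ 2 := by
  have hconj : (V * A * Vᵀ)ᵀ * (V * A * Vᵀ) = V * (Aᵀ * A) * Vᵀ := by
    rw [Matrix.mul_assoc, transpose_mul_self_orthogonal_mul hV, transpose_mul,
      transpose_transpose, Matrix.mul_assoc, Matrix.mul_assoc, Matrix.mul_assoc]
  rw [sum_sq_eq_trace_transpose_mul, sum_sq_eq_trace_transpose_mul, hconj,
    trace_orthogonal_conj hV]

def rectDiagonal (d : ℕ) {n : ℕ} (σ : Fin n → R) : Matrix (Fin d) (Fin n) R :=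
  of fun i j => if (i : ℕ) = (j : ℕ) then σ j else 0

theorem rectDiagonal_transpose_mul_self {d n : ℕ} (hd : n ≤ d) (σ : Fin n → R) :
    (rectDiagonal d σ)ᵀ * rectDiagonal d σ = diagonal fun j => σ j ^ 2 := by
  ext j k
  rw [mul_apply, Finset.sum_eq_single (Fin.castLE hd j)]
  · by_cases hjk : j = k
    · subst hjk; simp [rectDiagonal, sq]
    · simp [rectDiagonal, hjk, Fin.val_ne_of_ne hjk]
  · intro i _ hi
    have : (i : ℕ) ≠ j := fun h => hi (Fin.ext h)
    simp [rectDiagonal, this]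
  · simp

end Matrix

section Deviation

variable {ι : Type*} (s : Finset ι) (g : ι → ℝ)

theorem sqrt_sum_sq_le_sum_abs : √(∑ i ∈ s, g i ^ 2) ≤ ∑ i ∈ s, |g i| := by
  rw [Real.sqrt_le_left (sum_nonneg fun i _ => abs_nonneg (g i))]
  simpa only [sq_abs] using sum_sq_le_sq_sum_of_nonneg (f := fun i => |g i|) fun i _ => abs_nonneg _

theorem sum_abs_le_of_sum_eq_zero {c : ℝ} (hc : 0 ≤ c) (hsum : ∑ i ∈ s, g i = 0)
    (hg : ∀ i ∈ s, -c ≤ g i) : ∑ i ∈ s, |g i| ≤ 2 * #s * c := by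
  calc ∑ i ∈ s, |g i| = ∑ i ∈ s, (|g i| - g i) := by rw [sum_sub_distrib, hsum, sub_zero]
    _ = ∑ i ∈ s, 2 * (g i)⁻ := by
        simp only [abs_sub_eq_two_nsmul_negPart, nsmul_eq_mul, Nat.cast_ofNat]
    _ ≤ ∑ i ∈ s, 2 * c := by
        gcongr with i hi
        exact negPart_def (g i) ▸ max_le (neg_le.mp (hg i hi)) hc
    _ = 2 * #s * c := by rw [sum_const, nsmul_eq_mul]; ring

theorem sqrt_sum_sq_sub_mean_le [Fintype ι] [Nonempty ι] (a : ι → ℝ)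
    (hsum : ∑ i, a i = 1) {m : ℝ} (hm : ∀ i, m ≤ a i) :
    √(∑ i, (a i - 1 / Fintype.card ι) ^ 2) ≤ 2 * Fintype.card ι * (1 / Fintype.card ι - m) := by
  have hcard : (0 : ℝ) < Fintype.card ι := Nat.cast_pos.mpr Fintype.card_pos
  have hgap : 0 ≤ 1 / (Fintype.card ι : ℝ) - m := by
    have := card_nsmul_le_sum univ a m fun i _ => hm i
    rw [hsum, nsmul_eq_mul, card_univ] at this
    rw [sub_nonneg, le_div_iff₀ hcard]
    linarith
  have hcentered : ∑ i, (a i - 1 / Fintype.card ι) = 0 := by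
    rw [sum_sub_distrib, hsum, sum_const, card_univ, nsmul_eq_mul, mul_one_div_cancel hcard.ne',
      sub_self]
  calc √(∑ i, (a i - 1 / Fintype.card ι) ^ 2) ≤ ∑ i, |a i - 1 / Fintype.card ι| :=
        sqrt_sum_sq_le_sum_abs _ _
    _ ≤ 2 * Fintype.card ι * (1 / Fintype.card ι - m) :=
        sum_abs_le_of_sum_eq_zero _ _ hgap hcentered fun i _ => by linarith [hm i]

end Deviation

theorem orthogonality_gap_le (d n : ℕ) (hn : 0 < n) (hd : n ≤ d)
    (H : Matrix (Fin d) (Fin n) ℝ)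
    (σ : Fin n → ℝ) (hσpos : ∀ i, 0 ≤ σ i)
    (hmono : ∀ i j : Fin n, i ≤ j → σ j ≤ σ i)
    (U : Matrix (Fin d) (Fin d) ℝ) (V : Matrix (Fin n) (Fin n) ℝ)
    (hU : U ∈ Matrix.orthogonalGroup (Fin d) ℝ)
    (hV : V ∈ Matrix.orthogonalGroup (Fin n) ℝ)
    (hSVD : H = U * (Matrix.of fun (i : Fin d) (j : Fin n) =>
      if (i : ℕ) = (j : ℕ) then σ j else 0) * Vᵀ)
    (hfrob : Real.sqrt (∑ i, ∑ j, H i j ^ 2) = 1) :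
    Real.sqrt (∑ i, ∑ j, ((Hᵀ * H - (1 / (n : ℝ)) • (1 : Matrix (Fin n) (Fin n) ℝ)) i j) ^ 2)
      ≤ 2 * n * (1 / n - σ ⟨n - 1, Nat.sub_lt hn one_pos⟩ ^ 2) := by
  have hgram : Hᵀ * H = V * diagonal (fun j => σ j ^ 2) * Vᵀ := by
    change H = U * rectDiagonal d σ * Vᵀ at hSVD
    rw [hSVD, Matrix.mul_assoc, transpose_mul_self_orthogonal_mul hU, transpose_mul,
      transpose_transpose, Matrix.mul_assoc, ← Matrix.mul_assoc _ (rectDiagonal d σ),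
      rectDiagonal_transpose_mul_self hd, Matrix.mul_assoc]
  have hsum : ∑ j, σ j ^ 2 = 1 := by
    rwa [Real.sqrt_eq_one, sum_sq_eq_trace_transpose_mul, hgram, trace_orthogonal_conj hV,
      trace_diagonal] at hfrob
  have hlast : ∀ j, σ ⟨n - 1, Nat.sub_lt hn one_pos⟩ ^ 2 ≤ σ j ^ 2 := fun j =>
    pow_le_pow_left₀ (hσpos _) (hmono j _ (Fin.le_def.mpr (Nat.le_sub_one_of_lt j.isLt))) 2
  have : Nonempty (Fin n) := Fin.pos_iff_nonempty.mp hn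
  rw [hgram, orthogonal_conj_sub_smul_one hV, smul_one_eq_diagonal, diagonal_sub,
    sum_sq_orthogonal_conj hV, sum_sq_diagonal]
  simpa only [Fintype.card_fin] using sqrt_sum_sq_sub_mean_le (fun j => σ j ^ 2) hsum hlast
end

section
/- Let σ₁, ..., σ_n ≥ 0 satisfy Σᵢ σᵢ² = 1 and fix σ_n. Then Σᵢ σᵢ⁴ - 1/n ≤ 2(n-1)² (1/n - σ_n²)², i.e., the maximum of Σᵢ σᵢ⁴ subject to the constraints is bounded so that V(H)² ≤ 2(n-1)² V̂(H)², where V̂(H) = 1/n - σ_n² ≥ 0. -/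
open Finset

theorem sum_pow_four_bound (n : ℕ) (hn : 2 ≤ n) (σ : Fin n → ℝ)
    (hσ : ∀ i, 0 ≤ σ i) (hsum : ∑ i, σ i ^ 2 = 1)
    (hmin : ∀ i, σ ⟨n - 1, by omega⟩ ≤ σ i) :
    ∑ i, σ i ^ 4 - 1 / n ≤
      2 * ((n : ℝ) - 1) ^ 2 * (1 / n - σ ⟨n - 1, by omega⟩ ^ 2) ^ 2 := by
  have hN2 : (2:ℝ) ≤ (n:ℝ) := by exact_mod_cast hn
  have hNpos : (0:ℝ) < (n:ℝ) := by linarith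
  set N : ℝ := (n:ℝ) with hNdef
  have j : Fin n := ⟨n - 1, by omega⟩
  set m : ℝ := σ ⟨n - 1, by omega⟩ ^ 2 with hmdef
  show ∑ i, σ i ^ 4 - 1 / N ≤ 2 * (N - 1) ^ 2 * (1 / N - m) ^ 2
  have hm0 : 0 ≤ m := sq_nonneg _
  have hle : ∀ i, m ≤ σ i ^ 2 := fun i =>
    pow_le_pow_left₀ (hσ _) (hmin i) 2
  have hsub : ∑ i, (σ i ^ 2 - m) = 1 - N * m := by
    rw [Finset.sum_sub_distrib, hsum, Finset.sum_const, Finset.card_fin]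
    push_cast; ring
  have hkey : ∑ i, (σ i ^ 2 - m) ^ 2 ≤ (1 - N * m) ^ 2 := by
    rw [← hsub]
    exact Finset.sum_sq_le_sq_sum_of_nonneg (fun i _ => by linarith [hle i])
  have hexp : ∑ i, (σ i ^ 2 - m) ^ 2 = ∑ i, σ i ^ 4 - 2 * m + N * m ^ 2 := by
    have h : ∀ i : Fin n, (σ i ^ 2 - m) ^ 2 = σ i ^ 4 - 2 * m * σ i ^ 2 + m ^ 2 :=
      fun i => by ring
    simp_rw [h]
    rw [Finset.sum_add_distrib, Finset.sum_sub_distrib, ← Finset.mul_sum, hsum,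
      Finset.sum_const, Finset.card_fin]
    push_cast; ring
  have hcomb : ∑ i, σ i ^ 4 ≤ (1 - N * m) ^ 2 + 2 * m - N * m ^ 2 := by
    rw [hexp] at hkey; linarith
  have hsq : (1 - N * m) ^ 2 = N ^ 2 * (1 / N - m) ^ 2 := by
    field_simp
  have hNq : N * (1 / N - m) ^ 2 = 1 / N - 2 * m + N * m ^ 2 := by
    field_simp; ring
  have h3 : 0 ≤ (N - 1) * (N - 2) * (1 / N - m) ^ 2 :=
    mul_nonneg (mul_nonneg (by linarith) (by linarith)) (sq_nonneg _)
  nlinarith [hcomb, hsq, hNq, h3]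
end

section
/- Let σ₁,...,σ_n > 0 with Σᵢ σᵢ² = 1. Define the new singular values τᵢ = σᵢ^{1/2} / (Σⱼ σⱼ)^{1/2} (so Σ τᵢ² = 1). If the σᵢ are not all equal, then Σᵢ (τᵢ² - 1/n)² < Σᵢ (σᵢ² - 1/n)², i.e., the iterative orthogonalization step strictly decreases the orthogonality gap. -/
open Finset

theorem iterative_orthogonalization_decreases_gap (n : ℕ) (hn : 2 ≤ n)
    (σ : Fin n → ℝ) (hσ : ∀ i, 0 < σ i) (hsum : ∑ i, σ i ^ 2 = 1)
    (hne : ∃ i j, σ i ≠ σ j)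
    (τ : Fin n → ℝ) (hτ : ∀ i, τ i = Real.sqrt (σ i) / Real.sqrt (∑ j, σ j)) :
    ∑ i, (τ i ^ 2 - 1 / n) ^ 2 < ∑ i, (σ i ^ 2 - 1 / n) ^ 2 := by
  have hn0 : (0:ℝ) < n := by positivity
  set A : ℝ := ∑ j, σ j with hAdef
  set C : ℝ := ∑ j, σ j ^ 3 with hCdef
  set D : ℝ := ∑ j, σ j ^ 4 with hDdef
  have hne' : (Finset.univ : Finset (Fin n)).Nonempty := ⟨⟨0, by omega⟩, Finset.mem_univ _⟩
  have hA : 0 < A := Finset.sum_pos (fun i _ => hσ i) hne'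
  have hA0 : A ≠ 0 := ne_of_gt hA
  -- τ i ^ 2 = σ i / A
  have hτ2 : ∀ i, τ i ^ 2 = σ i / A := by
    intro i
    rw [hτ i, div_pow, Real.sq_sqrt (hσ i).le, Real.sq_sqrt hA.le]
  -- gap identity: if sum x = 1 then sum (x - 1/n)^2 = sum x^2 - 1/n
  have gapid : ∀ x : Fin n → ℝ, (∑ i, x i) = 1 →
      ∑ i, (x i - 1 / n) ^ 2 = (∑ i, (x i) ^ 2) - 1 / n := by
    intro x hx
    have : ∀ i ∈ Finset.univ, (x i - 1 / n) ^ 2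
        = (x i) ^ 2 - (2 / n) * x i + 1 / n ^ 2 := by
      intro i _
      field_simp
      ring
    rw [Finset.sum_congr rfl this, Finset.sum_add_distrib, Finset.sum_sub_distrib,
      ← Finset.mul_sum, hx, Finset.sum_const, Finset.card_univ, Fintype.card_fin,
      nsmul_eq_mul]
    field_simp
    ring
  have hsumτ : (∑ i, τ i ^ 2) = 1 := by
    simp only [hτ2]
    rw [← Finset.sum_div, ← hAdef, div_self hA0]
  have lhs_eq : ∑ i, (τ i ^ 2 - 1 / n) ^ 2 = 1 / A ^ 2 - 1 / n := by
    rw [gapid _ hsumτ]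
    congr 1
    have : ∀ i ∈ Finset.univ, (τ i ^ 2) ^ 2 = σ i ^ 2 / A ^ 2 := by
      intro i _; rw [hτ2 i, div_pow]
    rw [Finset.sum_congr rfl this, ← Finset.sum_div, hsum]
  have rhs_eq : ∑ i, (σ i ^ 2 - 1 / n) ^ 2 = D - 1 / n := by
    rw [gapid _ hsum]
    congr 1
    exact Finset.sum_congr rfl (fun i _ => by ring)
  rw [lhs_eq, rhs_eq]
  have key1 : 1 / A ≤ C := by
    have h0 : (0:ℝ) ≤ ∑ i, σ i * (σ i - 1 / A) ^ 2 :=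
      Finset.sum_nonneg (fun i _ => mul_nonneg (hσ i).le (sq_nonneg _))
    have hexp : ∑ i, σ i * (σ i - 1 / A) ^ 2 = C - 1 / A := by
      have : ∀ i ∈ Finset.univ, σ i * (σ i - 1 / A) ^ 2
          = σ i ^ 3 - (2 / A) * σ i ^ 2 + (1 / A ^ 2) * σ i := by
        intro i _; field_simp; ring
      rw [Finset.sum_congr rfl this, Finset.sum_add_distrib, Finset.sum_sub_distrib,
        ← Finset.mul_sum, ← Finset.mul_sum, hsum, ← hAdef, ← hCdef]
      field_simp
      ring
    linarith [hexp ▸ h0]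
  have key2 : C ^ 2 < D := by
    obtain ⟨i, j, hij⟩ := hne
    have hk : ∃ k, σ k ≠ C := by
      by_contra h
      push_neg at h
      exact hij ((h i).trans (h j).symm)
    obtain ⟨k, hk⟩ := hk
    have h0 : 0 < ∑ i, σ i ^ 2 * (σ i - C) ^ 2 := by
      refine Finset.sum_pos' (fun i _ => by positivity) ⟨k, Finset.mem_univ k, ?_⟩
      have h1 : σ k - C ≠ 0 := sub_ne_zero.mpr hk
      have h2 : σ k ≠ 0 := ne_of_gt (hσ k)
      positivity
    have hexp : ∑ i, σ i ^ 2 * (σ i - C) ^ 2 = D - C ^ 2 := by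
      have : ∀ i ∈ Finset.univ, σ i ^ 2 * (σ i - C) ^ 2
          = σ i ^ 4 - (2 * C) * σ i ^ 3 + C ^ 2 * σ i ^ 2 := by
        intro i _; ring
      rw [Finset.sum_congr rfl this, Finset.sum_add_distrib, Finset.sum_sub_distrib,
        ← Finset.mul_sum, ← Finset.mul_sum, hsum, ← hCdef, ← hDdef]
      ring
    linarith [hexp ▸ h0]
  have hC : 0 < C := lt_of_lt_of_le (by positivity) key1
  have hAC : 1 ≤ A * C := by
    have h := mul_le_mul_of_nonneg_left key1 hA.le
    rwa [mul_one_div, div_self hA0] at h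
  have h1 : 1 ≤ A ^ 2 * C ^ 2 := by nlinarith
  have h2 : A ^ 2 * C ^ 2 < A ^ 2 * D :=
    mul_lt_mul_of_pos_left key2 (by positivity)
  have hfin : 1 < A ^ 2 * D := lt_of_le_of_lt h1 h2
  have : 1 / A ^ 2 < D := by
    rw [div_lt_iff₀ (by positivity)]
    linarith [hfin]
  linarith
end

section
/- Fix n ≥ 2, θ ≥ 0, and let g(δ) = (1 + 2θ(1/n - δ))^{-3/2} · (1 + 2θ(1/n + δ/(n-1)))^{-(n-1)/2} for δ ∈ [0, 1/n]. Then g is convex on [0, 1/n]. -/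
open Real Set

/-- exp of a convex function is convex. -/
lemma convexOn_exp_comp {s : Set ℝ} {f : ℝ → ℝ} (hf : ConvexOn ℝ s f) :
    ConvexOn ℝ s (fun x => Real.exp (f x)) := by
  refine ⟨hf.1, fun x hx y hy a b ha hb hab => ?_⟩
  calc Real.exp (f (a • x + b • y)) ≤ Real.exp (a • f x + b • f y) :=
        Real.exp_le_exp.mpr (hf.2 hx hy ha hb hab)
    _ ≤ a • Real.exp (f x) + b • Real.exp (f y) :=
        convexOn_exp.2 (mem_univ _) (mem_univ _) ha hb hab

/-- `x ↦ -log (p + q * x)` is convex where `p + q * x > 0`. -/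
lemma convexOn_neg_log_affine {s : Set ℝ} (hs : Convex ℝ s) (p q : ℝ)
    (hpos : ∀ x ∈ s, 0 < p + q * x) :
    ConvexOn ℝ s (fun x => -Real.log (p + q * x)) := by
  have hlog : ConvexOn ℝ (Ioi (0:ℝ)) (fun y => -Real.log y) :=
    (strictConcaveOn_log_Ioi.concaveOn).neg
  have h := hlog.comp_affineMap (AffineMap.lineMap p (p + q) : ℝ →ᵃ[ℝ] ℝ)
  have hsub : s ⊆ (AffineMap.lineMap p (p + q) : ℝ →ᵃ[ℝ] ℝ) ⁻¹' (Ioi (0:ℝ)) := by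
    intro x hx
    simp only [mem_preimage, AffineMap.lineMap_apply, vsub_eq_sub, vadd_eq_add, smul_eq_mul,
      mem_Ioi]
    nlinarith [hpos x hx]
  refine ((h.subset hsub hs).congr fun x hx => ?_)
  simp only [Function.comp_apply, AffineMap.lineMap_apply, vsub_eq_sub, vadd_eq_add, smul_eq_mul]
  ring_nf

theorem g_convex (n : ℕ) (hn : 2 ≤ n) (θ : ℝ) (hθ : 0 ≤ θ) :
    ConvexOn ℝ (Set.Icc (0 : ℝ) (1 / n))
      (fun δ : ℝ =>
        (1 + 2 * θ * (1 / n - δ)) ^ (-(3 : ℝ) / 2) *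
          (1 + 2 * θ * (1 / n + δ / ((n : ℝ) - 1))) ^ (-((n : ℝ) - 1) / 2)) := by
  have hn1 : (1:ℝ) ≤ (n:ℝ) - 1 := by
    have : (2:ℝ) ≤ (n:ℝ) := by exact_mod_cast hn
    linarith
  have hn1pos : (0:ℝ) < (n:ℝ) - 1 := by linarith
  have hnpos : (0:ℝ) < (n:ℝ) := by linarith
  -- positivity of the bases on the set
  have ha : ∀ x ∈ Icc (0:ℝ) (1/n), 0 < 1 + 2*θ*(1/n) + (-(2*θ)) * x := by
    intro x hx
    obtain ⟨hx0, hx1⟩ := hx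
    have h1 : 0 ≤ 1/(n:ℝ) - x := by linarith
    nlinarith
  have hb : ∀ x ∈ Icc (0:ℝ) (1/n), 0 < 1 + 2*θ*(1/n) + (2*θ/((n:ℝ)-1)) * x := by
    intro x hx
    obtain ⟨hx0, hx1⟩ := hx
    have : 0 ≤ 2*θ/((n:ℝ)-1) * x := by positivity
    have : 0 ≤ 2*θ*(1/(n:ℝ)) := by positivity
    linarith
  have hconv : Convex ℝ (Icc (0:ℝ) (1/n)) := convex_Icc _ _
  have h1 : ConvexOn ℝ (Icc (0:ℝ) (1/n))
      (fun x => (3/2 : ℝ) • (-Real.log (1 + 2*θ*(1/n) + (-(2*θ)) * x))) :=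
    (convexOn_neg_log_affine hconv _ _ ha).smul (by norm_num)
  have h2 : ConvexOn ℝ (Icc (0:ℝ) (1/n))
      (fun x => (((n:ℝ)-1)/2 : ℝ) • (-Real.log (1 + 2*θ*(1/n) + (2*θ/((n:ℝ)-1)) * x))) :=
    (convexOn_neg_log_affine hconv _ _ hb).smul (by positivity)
  have hsum := (h1.add h2)
  have hexp := convexOn_exp_comp hsum
  refine hexp.congr (fun x hx => ?_)
  obtain ⟨hx0, hx1⟩ := hx
  have hax := ha x ⟨hx0, hx1⟩
  have hbx := hb x ⟨hx0, hx1⟩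
  simp only [Pi.add_apply, smul_eq_mul]
  have e1 : 1 + 2*θ*(1/(n:ℝ) - x) = 1 + 2*θ*(1/(n:ℝ)) + (-(2*θ)) * x := by ring
  have e2 : 1 + 2*θ*(1/(n:ℝ) + x/((n:ℝ)-1)) = 1 + 2*θ*(1/(n:ℝ)) + (2*θ/((n:ℝ)-1)) * x := by
    field_simp; ring
  rw [e1, e2, Real.rpow_def_of_pos hax, Real.rpow_def_of_pos hbx, ← Real.exp_add]
  congr 1
  ring
end
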